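/- arXiv:1708.07093 — 6 statements merged into one kernel-verified Lean document; each statement's English description precedes it below -/
import Mathlib

section
/- Let A and B be real symmetric n×n matrices with A indefinite (A has both a positive and a negative eigenvalue and all eigenvalues nonzero). If every real vector x with x^T A x = 0 also satisfies x^T B x = 0, then B = λA for some real scalar λ. -/
open Matrix

noncomputable def ev {n : ℕ} (i : Fin n) : Fin n → ℝ := Pi.single i 1

lemma qf_pair {n : ℕ} (M : Matrix (Fin n) (Fin n) ℝ) (i j : Fin n) (a b : ℝ) :
    (a • ev i + b • ev j) ⬝ᵥ (M *ᵥ (a • ev i + b • ev j)) =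
    a*a*M i i + a*b*M i j + b*a*M j i + b*b*M j j := by
  simp [ev, mulVec_add, mulVec_smul, dotProduct_add, add_dotProduct, smul_dotProduct,
    dotProduct_smul, mulVec_single, single_dotProduct, smul_eq_mul]
  ring

lemma qf_triple {n : ℕ} (M : Matrix (Fin n) (Fin n) ℝ) (i j k : Fin n) (a b c : ℝ) :
    (a • ev i + b • ev j + c • ev k) ⬝ᵥ (M *ᵥ (a • ev i + b • ev j + c • ev k)) =
    a*a*M i i + a*b*M i j + b*a*M j i + b*b*M j j
      + a*c*M i k + c*a*M k i + b*c*M j k + c*b*M k j + c*c*M k k := by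
  simp [ev, mulVec_add, mulVec_smul, dotProduct_add, add_dotProduct, smul_dotProduct,
    dotProduct_smul, mulVec_single, single_dotProduct, smul_eq_mul]
  ring

lemma core {n : ℕ} (d : Fin n → ℝ) (C : Matrix (Fin n) (Fin n) ℝ)
    (hC : ∀ i j, C j i = C i j)
    (p q : Fin n) (hp : 0 < d p) (hq : d q < 0) (hne : ∀ i, d i ≠ 0)
    (hcone : ∀ y : Fin n → ℝ, y ⬝ᵥ (diagonal d *ᵥ y) = 0 → y ⬝ᵥ (C *ᵥ y) = 0) :
    ∃ lam : ℝ, C = lam • diagonal d := by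
  have opp : ∀ i j, 0 < d i → d j < 0 → C i j = 0 ∧ C i i * d j = C j j * d i := by
    intro i j hi hj
    have hij : i ≠ j := fun e => by rw [e] at hi; linarith
    set a := Real.sqrt (-d j) with ha
    set b := Real.sqrt (d i) with hb
    have ha2 : a * a = -d j := Real.mul_self_sqrt (by linarith)
    have hb2 : b * b = d i := Real.mul_self_sqrt (by linarith)
    have hapos : 0 < a := Real.sqrt_pos.2 (by linarith)
    have hbpos : 0 < b := Real.sqrt_pos.2 (by linarith)
    have key : ∀ s : ℝ, s * s = d i →
        a*a*C i i + a*s*C i j + s*a*C j i + s*s*C j j = 0 := by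
      intro s hs
      have h0 : (a • ev i + s • ev j) ⬝ᵥ (diagonal d *ᵥ (a • ev i + s • ev j)) = 0 := by
        rw [qf_pair]
        rw [diagonal_apply_eq, diagonal_apply_eq, diagonal_apply_ne d hij,
          diagonal_apply_ne d hij.symm]
        nlinarith
      have := hcone _ h0
      rwa [qf_pair] at this
    have k1 := key b hb2
    have k2 := key (-b) (by nlinarith)
    rw [hC i j] at k1 k2
    have hdiff : (a*b) * C i j = 0 := by linarith
    have hCij : C i j = 0 :=
      (mul_eq_zero.mp hdiff).resolve_left (ne_of_gt (mul_pos hapos hbpos))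
    have hsum : a*a*C i i + b*b*C j j = 0 := by linarith
    refine ⟨hCij, ?_⟩
    have : -d j * C i i + d i * C j j = 0 := by rw [← ha2, ← hb2]; linarith
    linarith
  set lam := C p p / d p with hlam
  have hdp := hne p
  have hdq := hne q
  have diag : ∀ i, C i i = lam * d i := by
    intro i
    rcases lt_or_gt_of_ne (hne i) with hi | hi
    · have := (opp p i hp hi).2
      rw [hlam]; field_simp; linarith
    · have h1 := (opp i q hi hq).2
      have h2 := (opp p q hp hq).2
      rw [hlam]; field_simp
      have h3 : C i i * d p * d q = C p p * d i * d q := by nlinarith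
      have := mul_right_cancel₀ hdq h3
      linarith
  have offd : ∀ i j, i ≠ j → C i j = 0 := by
    intro i j hij
    rcases lt_or_gt_of_ne (hne i) with hi | hi <;> rcases lt_or_gt_of_ne (hne j) with hj | hj
    · -- both negative, use p
      have hip : i ≠ p := fun e => by rw [e] at hi; linarith
      have hjp : j ≠ p := fun e => by rw [e] at hj; linarith
      have hCpi : C p i = 0 := (opp p i hp hi).1
      have hCpj : C p j = 0 := (opp p j hp hj).1
      have hCip : C i p = 0 := by rw [← hC i p]; exact hCpi
      have hCjp : C j p = 0 := by rw [← hC j p]; exact hCpj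
      set c := Real.sqrt (-(d i + d j)/(d p)) with hc
      have hc2 : c * c = -(d i + d j)/(d p) :=
        Real.mul_self_sqrt (div_nonneg (by linarith) (le_of_lt hp))
      have hc2' : c*c*d p = -(d i + d j) := by rw [hc2]; field_simp
      have h0 : ((1:ℝ) • ev i + (1:ℝ) • ev j + c • ev p) ⬝ᵥ
          (diagonal d *ᵥ ((1:ℝ) • ev i + (1:ℝ) • ev j + c • ev p)) = 0 := by
        rw [qf_triple, diagonal_apply_eq, diagonal_apply_eq, diagonal_apply_eq,
          diagonal_apply_ne d hij, diagonal_apply_ne d hij.symm,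
          diagonal_apply_ne d hip, diagonal_apply_ne d hip.symm,
          diagonal_apply_ne d hjp, diagonal_apply_ne d hjp.symm]
        nlinarith
      have hk := hcone _ h0
      rw [qf_triple, hCpi, hCpj, hCip, hCjp, hC j i, diag i, diag j, diag p] at hk
      have e : c*c*(lam*d p) = -(lam*d i) - lam*d j := by
        rw [show c*c*(lam*d p) = lam*(c*c*d p) by ring, hc2']; ring
      rw [← hC i j]; linarith
    · rw [← hC i j]; exact (opp j i hj hi).1
    · exact (opp i j hi hj).1
    · -- both positive, use q
      have hiq : i ≠ q := fun e => by rw [e] at hi; linarith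
      have hjq : j ≠ q := fun e => by rw [e] at hj; linarith
      have hCiq : C i q = 0 := (opp i q hi hq).1
      have hCjq : C j q = 0 := (opp j q hj hq).1
      have hCqi : C q i = 0 := by rw [← hC q i]; exact hCiq
      have hCqj : C q j = 0 := by rw [← hC q j]; exact hCjq
      set c := Real.sqrt ((d i + d j)/(-d q)) with hc
      have hc2 : c * c = (d i + d j)/(-d q) :=
        Real.mul_self_sqrt (div_nonneg (by linarith) (by linarith))
      have hc2' : c*c*d q = -(d i + d j) := by
        have h : -d q ≠ 0 := by linarith
        rw [hc2]
        calc (d i + d j)/(-d q) * d q = -((d i + d j)/(-d q) * (-d q)) := by ring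
          _ = -(d i + d j) := by rw [div_mul_cancel₀ _ h]
      have h0 : ((1:ℝ) • ev i + (1:ℝ) • ev j + c • ev q) ⬝ᵥ
          (diagonal d *ᵥ ((1:ℝ) • ev i + (1:ℝ) • ev j + c • ev q)) = 0 := by
        rw [qf_triple, diagonal_apply_eq, diagonal_apply_eq, diagonal_apply_eq,
          diagonal_apply_ne d hij, diagonal_apply_ne d hij.symm,
          diagonal_apply_ne d hiq, diagonal_apply_ne d hiq.symm,
          diagonal_apply_ne d hjq, diagonal_apply_ne d hjq.symm]
        nlinarith
      have hk := hcone _ h0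
      rw [qf_triple, hCiq, hCjq, hCqi, hCqj, hC j i, diag i, diag j, diag q] at hk
      have e : c*c*(lam*d q) = -(lam*d i) - lam*d j := by
        rw [show c*c*(lam*d q) = lam*(c*c*d q) by ring, hc2']; ring
      rw [← hC i j]; linarith
  refine ⟨lam, ?_⟩
  ext i j
  by_cases e : i = j
  · subst e; simp [diagonal_apply_eq, diag i]
  · simp [diagonal_apply_ne d e, offd i j e]

/-- Elton's lemma: if `A` is an indefinite real symmetric matrix (eigenvalues nonzero
and of both signs) and the real cone of `A` is contained in the cone of `B` (with `B`
symmetric), then `B` is a scalar multiple of `A`. -/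
theorem stmt_2 (n : ℕ) (A B : Matrix (Fin n) (Fin n) ℝ)
    (hA : A.IsHermitian) (hB : B.IsHermitian)
    (hpos : ∃ i, 0 < hA.eigenvalues i)
    (hneg : ∃ i, hA.eigenvalues i < 0)
    (hne : ∀ i, hA.eigenvalues i ≠ 0)
    (h : ∀ x : Fin n → ℝ, x ⬝ᵥ (A *ᵥ x) = 0 → x ⬝ᵥ (B *ᵥ x) = 0) :
    ∃ lam : ℝ, B = lam • A := by
  classical
  obtain ⟨p, hp⟩ := hpos
  obtain ⟨q, hq⟩ := hneg
  set d := hA.eigenvalues with hd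
  set U : Matrix (Fin n) (Fin n) ℝ := (hA.eigenvectorUnitary : Matrix (Fin n) (Fin n) ℝ) with hU
  have hU1 : star U * U = 1 := hA.eigenvectorUnitary.2.1
  have hU2 : U * star U = 1 := hA.eigenvectorUnitary.2.2
  have hspec : A = U * diagonal d * star U := by
    have hsp := hA.spectral_theorem
    have : (RCLike.ofReal ∘ d : Fin n → ℝ) = d := by funext i; simp
    rw [this] at hsp
    exact hsp
  have hdiagA : diagonal d = star U * A * U := by
    calc diagonal d = (star U * U) * diagonal d * (star U * U) := by rw [hU1]; simp
      _ = star U * (U * diagonal d * star U) * U := by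
          simp only [Matrix.mul_assoc]
      _ = star U * A * U := by rw [← hspec]
  set C := star U * B * U with hCdef
  have hCherm : C.IsHermitian := by
    show Cᴴ = C
    have hBt : Bᵀ = B := by
      ext i j; have := hB.apply i j; simpa using this
    rw [hCdef]
    simp [conjTranspose_mul, hBt, Matrix.star_eq_conjTranspose, Matrix.mul_assoc]
  have hCsymm : ∀ i j, C j i = C i j := by
    intro i j
    have := hCherm.apply i j
    simpa using this
  have transfer : ∀ (M : Matrix (Fin n) (Fin n) ℝ) (y : Fin n → ℝ),
      y ⬝ᵥ ((star U * M * U) *ᵥ y) = (U *ᵥ y) ⬝ᵥ (M *ᵥ (U *ᵥ y)) := by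
    intro M y
    have hstar : star U = Uᵀ := by ext i j; simp [Matrix.star_apply]
    rw [show star U * M * U = star U * (M * U) from by rw [Matrix.mul_assoc],
      ← mulVec_mulVec, ← mulVec_mulVec, hstar, dotProduct_mulVec y Uᵀ _, vecMul_transpose]
  have hcone : ∀ y : Fin n → ℝ, y ⬝ᵥ (diagonal d *ᵥ y) = 0 → y ⬝ᵥ (C *ᵥ y) = 0 := by
    intro y hy
    rw [hCdef, transfer]
    apply h
    rw [← transfer, ← hdiagA]
    exact hy
  obtain ⟨lam, hlam⟩ := core d C hCsymm p q hp hq hne hcone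
  refine ⟨lam, ?_⟩
  have hBC : B = U * C * star U := by
    calc B = (U * star U) * B * (U * star U) := by rw [hU2]; simp
      _ = U * (star U * B * U) * star U := by simp only [Matrix.mul_assoc]
      _ = U * C * star U := by rw [← hCdef]
  rw [hBC, hlam, hspec]
  simp [Matrix.mul_smul, Matrix.smul_mul]
end

section
/- Let C be an invertible, indefinite 3×3 real symmetric matrix and p a nonzero vector. If the reflection R = I − 2p·p^T/(p^T p) maps the cone {x : x^T C x = 0} into itself (i.e., x^T C x = 0 implies (Rx)^T C (Rx) = 0 for all x), then p is an eigenvector of C. -/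
open Matrix


def cp3 (a b : Fin 3 → ℝ) : Fin 3 → ℝ :=
  ![a 1 * b 2 - a 2 * b 1, a 2 * b 0 - a 0 * b 2, a 0 * b 1 - a 1 * b 0]

lemma cp3_dot_left (a b : Fin 3 → ℝ) : a ⬝ᵥ cp3 a b = 0 := by
  simp [cp3, dotProduct, Fin.sum_univ_three]; ring

lemma cp3_dot_right (a b : Fin 3 → ℝ) : b ⬝ᵥ cp3 a b = 0 := by
  simp [cp3, dotProduct, Fin.sum_univ_three]; ring

lemma cp3_zero (a : Fin 3 → ℝ) : cp3 a 0 = 0 := by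
  funext i; fin_cases i <;> simp [cp3]

lemma cp3_cp3 (a b c : Fin 3 → ℝ) :
    cp3 a (cp3 b c) = (a ⬝ᵥ c) • b - (a ⬝ᵥ b) • c := by
  funext i; fin_cases i <;>
    simp [cp3, dotProduct, Fin.sum_univ_three] <;> ring

lemma cp3_cp3' (a b c : Fin 3 → ℝ) :
    cp3 (cp3 a b) c = (c ⬝ᵥ a) • b - (c ⬝ᵥ b) • a := by
  funext i; fin_cases i <;>
    simp [cp3, dotProduct, Fin.sum_univ_three] <;> ring


lemma aux1 (Qp L q s : ℝ) (h1 : Qp ≠ 0) (h2 : s^2 = L^2 - Qp*q) :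
    ((-L+s)/Qp)^2 * Qp + 2*((-L+s)/Qp)*L + q = 0 := by
  field_simp
  nlinarith [h2]

lemma aux2 (Qp L : ℝ) (h1 : Qp ≠ 0) :
    (-(2*L)/Qp)^2 * Qp + 2*(-(2*L)/Qp)*L + 0 = 0 := by
  field_simp
  ring

lemma aux3 (L q : ℝ) (hL : L ≠ 0) : (-q/(2*L))^2 * 0 + 2*(-q/(2*L))*L + q = 0 := by
  field_simp
  ring

lemma aux4 (A B c : ℝ) (hA : A < 0) (hf : ∀ s : ℝ, 0 < A*s^2 + 2*B*s + c) : False := by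
  set s₀ := Real.sqrt ((|c|+1)/(-A)) with hs₀
  have hnn : 0 ≤ (|c|+1)/(-A) := div_nonneg (by positivity) (by linarith)
  have hs : s₀^2 = (|c|+1)/(-A) := Real.sq_sqrt hnn
  have e : A * s₀^2 = -(|c|+1) := by
    rw [hs, ← mul_div_assoc, div_neg, mul_comm A, mul_div_assoc, div_self hA.ne, mul_one]
  have h2 := hf (-s₀)
  rw [neg_sq] at h2
  nlinarith [hf s₀, h2, le_abs_self c, e]

lemma aux5 (B c : ℝ) (hf : ∀ s : ℝ, 0 < 2*B*s + c) : B = 0 := by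
  by_contra hB
  have e : 2*B*((-c-1)/(2*B)) = -c-1 := by field_simp
  linarith [hf ((-c-1)/(2*B)), e]

/-- If the reflection across the plane perpendicular to `p ≠ 0` maps the cone of an
invertible indefinite symmetric matrix `C` into itself, then `p` is an eigenvector of `C`. -/
theorem stmt_4 (C : Matrix (Fin 3) (Fin 3) ℝ) (hC : Cᵀ = C)
    (hdet : IsUnit C.det)
    (hpos : ∃ x : Fin 3 → ℝ, 0 < x ⬝ᵥ (C *ᵥ x))
    (hneg : ∃ x : Fin 3 → ℝ, x ⬝ᵥ (C *ᵥ x) < 0)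
    (p : Fin 3 → ℝ) (hp : p ≠ 0)
    (R : Matrix (Fin 3) (Fin 3) ℝ)
    (hR : R = 1 - (2 / (p ⬝ᵥ p)) • vecMulVec p p)
    (h : ∀ x : Fin 3 → ℝ, x ⬝ᵥ (C *ᵥ x) = 0 → (R *ᵥ x) ⬝ᵥ (C *ᵥ (R *ᵥ x)) = 0) :
    ∃ c : ℝ, C *ᵥ p = c • p := by
  have hpp : p ⬝ᵥ p ≠ 0 := fun hc => hp (dotProduct_self_eq_zero.mp hc)
  have hsymm : ∀ x y : Fin 3 → ℝ, x ⬝ᵥ (C *ᵥ y) = y ⬝ᵥ (C *ᵥ x) := by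
    intro x y
    rw [dotProduct_mulVec, ← mulVec_transpose, hC, dotProduct_comm]
  have hCinj : ∀ z : Fin 3 → ℝ, C *ᵥ z = 0 → z = 0 := by
    intro z hz
    have h2 : (C⁻¹ * C) *ᵥ z = C⁻¹ *ᵥ (C *ᵥ z) := by rw [← mulVec_mulVec]
    rw [Matrix.nonsing_inv_mul C hdet, one_mulVec, hz, mulVec_zero] at h2
    exact h2
  have hexp : ∀ (a : ℝ) (x y : Fin 3 → ℝ),
      (a • x + y) ⬝ᵥ (C *ᵥ (a • x + y)) =
        a^2 * (x ⬝ᵥ (C *ᵥ x)) + 2*a*(x ⬝ᵥ (C *ᵥ y)) + y ⬝ᵥ (C *ᵥ y) := by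
    intro a x y
    have hs := hsymm y x
    simp only [mulVec_add, mulVec_smul, dotProduct_add, add_dotProduct,
      dotProduct_smul, smul_dotProduct, smul_eq_mul]
    rw [hs]; ring
  have hvmv : ∀ x : Fin 3 → ℝ, vecMulVec p p *ᵥ x = (p ⬝ᵥ x) • p := by
    intro x
    funext i
    simp [vecMulVec, mulVec, dotProduct, Finset.mul_sum, Fin.sum_univ_three]
    ring
  have hRv : ∀ (a : ℝ) (w : Fin 3 → ℝ), p ⬝ᵥ w = 0 →
      R *ᵥ (a • p + w) = (-a) • p + w := by
    intro a w hw
    rw [hR, sub_mulVec, one_mulVec, smul_mulVec, hvmv]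
    rw [dotProduct_add, dotProduct_smul, hw, smul_eq_mul]
    have he : (2 / (p ⬝ᵥ p)) • ((a * (p ⬝ᵥ p) + 0) • p) = (2*a) • p := by
      rw [smul_smul]; congr 1
      rw [add_zero]
      have h2 : ∀ t : ℝ, t ≠ 0 → 2 / t * (a * t) = 2 * a := by
        intro t ht; field_simp
      exact h2 _ hpp
    rw [he]
    funext i; simp; ring
  have key : ∀ (a : ℝ) (w : Fin 3 → ℝ), p ⬝ᵥ w = 0 →
      (a • p + w) ⬝ᵥ (C *ᵥ (a • p + w)) = 0 → a * (p ⬝ᵥ (C *ᵥ w)) = 0 := by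
    intro a w hw hx
    have h1 := h _ hx
    rw [hRv a w hw] at h1
    rw [hexp] at h1 hx
    nlinarith [h1, hx]
  -- the candidate normal vector
  set z : Fin 3 → ℝ := cp3 p (C *ᵥ p) with hzdef
  set n : Fin 3 → ℝ := (p ⬝ᵥ (C *ᵥ p)) • p - (p ⬝ᵥ p) • (C *ᵥ p) with hndef
  have hn : cp3 p z = n := cp3_cp3 p p (C *ᵥ p)
  by_cases hn0 : n = 0
  · -- degenerate case: C p is already parallel to p
    refine ⟨(p ⬝ᵥ (C *ᵥ p)) / (p ⬝ᵥ p), ?_⟩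
    have h1 : (p ⬝ᵥ (C *ᵥ p)) • p = (p ⬝ᵥ p) • (C *ᵥ p) := sub_eq_zero.mp hn0
    have h2 := congrArg (fun v => (p ⬝ᵥ p)⁻¹ • v) h1
    simp only [smul_smul] at h2
    rw [inv_mul_cancel₀ hpp, one_smul] at h2
    rw [div_eq_inv_mul]
    exact h2.symm
  · -- main case
    suffices hL : ∀ w : Fin 3 → ℝ, p ⬝ᵥ w = 0 → p ⬝ᵥ (C *ᵥ w) = 0 by
      refine ⟨(p ⬝ᵥ (C *ᵥ p)) / (p ⬝ᵥ p), ?_⟩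
      set c : ℝ := (p ⬝ᵥ (C *ᵥ p)) / (p ⬝ᵥ p) with hcdef
      set w' : Fin 3 → ℝ := C *ᵥ p - c • p with hw'def
      have hw'p : p ⬝ᵥ w' = 0 := by
        rw [hw'def, dotProduct_sub, dotProduct_smul, smul_eq_mul, hcdef,
          div_mul_cancel₀ _ hpp, sub_self]
      have hLw' := hL w' hw'p
      have hww' : w' ⬝ᵥ w' = 0 := by
        have e1 : p ⬝ᵥ (C *ᵥ w') = w' ⬝ᵥ (C *ᵥ p) := hsymm p w'
        have e2 : w' ⬝ᵥ (C *ᵥ p) = w' ⬝ᵥ w' + c * (w' ⬝ᵥ p) := by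
          rw [hw'def]
          simp only [dotProduct_sub, sub_dotProduct, dotProduct_smul, smul_dotProduct,
            smul_eq_mul]
          ring
        have e3 : w' ⬝ᵥ p = 0 := by rw [dotProduct_comm]; exact hw'p
        rw [e1, e2, e3] at hLw'; linarith
      have : w' = 0 := dotProduct_self_eq_zero.mp hww'
      rw [hw'def, sub_eq_zero] at this
      exact this
    by_contra hLc
    push_neg at hLc
    obtain ⟨y₀, hy₀p, hy₀L⟩ := hLc
    have hz0 : z ≠ 0 := by
      intro hz; apply hn0; rw [← hn, hz, cp3_zero]
    have hzp : p ⬝ᵥ z = 0 := cp3_dot_left p (C *ᵥ p)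
    have hzL : p ⬝ᵥ (C *ᵥ z) = 0 := by
      rw [hsymm p z, dotProduct_comm]
      exact cp3_dot_right p (C *ᵥ p)
    have hnn : n ⬝ᵥ n ≠ 0 := fun hc => hn0 (dotProduct_self_eq_zero.mp hc)
    have hy₀n : y₀ ⬝ᵥ n ≠ 0 := by
      rw [hndef, dotProduct_sub, dotProduct_smul, dotProduct_smul]
      have e1 : y₀ ⬝ᵥ p = 0 := by rw [dotProduct_comm]; exact hy₀p
      have e2 : y₀ ⬝ᵥ (C *ᵥ p) = p ⬝ᵥ (C *ᵥ y₀) := hsymm y₀ p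
      rw [e1, e2]
      simp only [smul_eq_mul, mul_zero, zero_sub, neg_ne_zero]
      exact mul_ne_zero hpp hy₀L
    have hu : ∀ u : Fin 3 → ℝ, p ⬝ᵥ u = 0 → z ⬝ᵥ u = 0 → y₀ ⬝ᵥ u = 0 → u = 0 := by
      intro u h1 h2 h3
      have e1 : cp3 n u = 0 := by
        rw [← hn, cp3_cp3' p z u]
        have e1a : u ⬝ᵥ p = 0 := by rw [dotProduct_comm]; exact h1
        have e1b : u ⬝ᵥ z = 0 := by rw [dotProduct_comm]; exact h2
        rw [e1a, e1b]; simp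
      have e2 : (n ⬝ᵥ u) • n - (n ⬝ᵥ n) • u = 0 := by
        rw [← cp3_cp3 n n u, e1, cp3_zero]
      have e3 := congrArg (fun v => y₀ ⬝ᵥ v) e2
      simp only [dotProduct_sub, dotProduct_smul, smul_eq_mul, dotProduct_zero] at e3
      rw [h3, mul_zero, sub_zero] at e3
      have e4 : n ⬝ᵥ u = 0 := (mul_eq_zero.mp e3).resolve_right hy₀n
      rw [e4, zero_smul, zero_sub, neg_eq_zero, smul_eq_zero] at e2
      exact e2.resolve_left hnn
    have hzkill : z ⬝ᵥ (C *ᵥ z) = 0 → y₀ ⬝ᵥ (C *ᵥ z) = 0 → False := by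
      intro hq hb
      have h0 : C *ᵥ z = 0 := hu (C *ᵥ z) hzL hq hb
      exact hz0 (hCinj z h0)
    by_cases hqp : p ⬝ᵥ (C *ᵥ p) = 0
    · -- isotropic p case
      have hA0 : ∀ w : Fin 3 → ℝ, p ⬝ᵥ w = 0 → p ⬝ᵥ (C *ᵥ w) ≠ 0 →
          w ⬝ᵥ (C *ᵥ w) = 0 := by
        intro w hw hLw
        have hx : ((-(w ⬝ᵥ (C *ᵥ w))/(2*(p ⬝ᵥ (C *ᵥ w)))) • p + w) ⬝ᵥ
            (C *ᵥ ((-(w ⬝ᵥ (C *ᵥ w))/(2*(p ⬝ᵥ (C *ᵥ w)))) • p + w)) = 0 := by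
          rw [hexp, hqp]
          exact aux3 _ _ hLw
        have hk := key _ w hw hx
        have : ∀ (L q : ℝ), L ≠ 0 → -q/(2*L) * L = 0 → q = 0 := by
          intro L q hL hh
          rcases mul_eq_zero.mp hh with h1 | h1
          · rcases div_eq_zero_iff.mp h1 with h2 | h2
            · linarith
            · exact absurd (by linarith : L = 0) hL
          · exact absurd h1 hL
        exact this _ _ hLw hk
      have hqy₀ : y₀ ⬝ᵥ (C *ᵥ y₀) = 0 := hA0 y₀ hy₀p hy₀L
      have hq1 : ((1:ℝ) • z + y₀) ⬝ᵥ (C *ᵥ ((1:ℝ) • z + y₀)) = 0 := by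
        apply hA0
        · rw [dotProduct_add, dotProduct_smul, hzp, hy₀p, smul_eq_mul]; ring
        · rw [mulVec_add, mulVec_smul, dotProduct_add, dotProduct_smul, hzL,
            smul_eq_mul, mul_zero, zero_add]
          exact hy₀L
      have hq2 : ((-1:ℝ) • z + y₀) ⬝ᵥ (C *ᵥ ((-1:ℝ) • z + y₀)) = 0 := by
        apply hA0
        · rw [dotProduct_add, dotProduct_smul, hzp, hy₀p, smul_eq_mul]; ring
        · rw [mulVec_add, mulVec_smul, dotProduct_add, dotProduct_smul, hzL,
            smul_eq_mul, mul_zero, zero_add]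
          exact hy₀L
      rw [hexp] at hq1 hq2
      have hbsym : z ⬝ᵥ (C *ᵥ y₀) = y₀ ⬝ᵥ (C *ᵥ z) := hsymm z y₀
      apply hzkill
      · nlinarith [hq1, hq2, hqy₀]
      · rw [← hbsym]; nlinarith [hq1, hq2, hqy₀]
    · -- non-isotropic p case
      have hA : ∀ w : Fin 3 → ℝ, p ⬝ᵥ w = 0 → p ⬝ᵥ (C *ᵥ w) ≠ 0 →
          (p ⬝ᵥ (C *ᵥ w))^2 < (p ⬝ᵥ (C *ᵥ p)) * (w ⬝ᵥ (C *ᵥ w)) := by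
        intro w hw hLw
        by_contra hle
        push_neg at hle
        have hnonneg : 0 ≤ (p ⬝ᵥ (C *ᵥ w))^2 -
            (p ⬝ᵥ (C *ᵥ p)) * (w ⬝ᵥ (C *ᵥ w)) := by linarith
        have hs : (Real.sqrt ((p ⬝ᵥ (C *ᵥ w))^2 -
            (p ⬝ᵥ (C *ᵥ p)) * (w ⬝ᵥ (C *ᵥ w))))^2 = (p ⬝ᵥ (C *ᵥ w))^2 -
            (p ⬝ᵥ (C *ᵥ p)) * (w ⬝ᵥ (C *ᵥ w)) := Real.sq_sqrt hnonneg
        set s := Real.sqrt ((p ⬝ᵥ (C *ᵥ w))^2 -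
            (p ⬝ᵥ (C *ᵥ p)) * (w ⬝ᵥ (C *ᵥ w))) with hsdef
        rcases eq_or_ne (-(p ⬝ᵥ (C *ᵥ w)) + s) 0 with h0 | h0
        · have hq0 : w ⬝ᵥ (C *ᵥ w) = 0 := by
            have hsL : s = p ⬝ᵥ (C *ᵥ w) := by linarith
            have h2 : (p ⬝ᵥ (C *ᵥ p)) * (w ⬝ᵥ (C *ᵥ w)) = 0 := by
              rw [hsL] at hs; linarith
            exact (mul_eq_zero.mp h2).resolve_left hqp
          have ha : -(2*(p ⬝ᵥ (C *ᵥ w)))/(p ⬝ᵥ (C *ᵥ p)) ≠ 0 :=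
            div_ne_zero (by intro hc; apply hLw; linarith) hqp
          have hx : ((-(2*(p ⬝ᵥ (C *ᵥ w)))/(p ⬝ᵥ (C *ᵥ p))) • p + w) ⬝ᵥ
              (C *ᵥ ((-(2*(p ⬝ᵥ (C *ᵥ w)))/(p ⬝ᵥ (C *ᵥ p))) • p + w)) = 0 := by
            rw [hexp, hq0]
            exact aux2 _ _ hqp
          have hk := key _ w hw hx
          exact absurd ((mul_eq_zero.mp hk).resolve_left ha) hLw
        · have ha : (-(p ⬝ᵥ (C *ᵥ w)) + s)/(p ⬝ᵥ (C *ᵥ p)) ≠ 0 := div_ne_zero h0 hqp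
          have hx : (((-(p ⬝ᵥ (C *ᵥ w)) + s)/(p ⬝ᵥ (C *ᵥ p))) • p + w) ⬝ᵥ
              (C *ᵥ (((-(p ⬝ᵥ (C *ᵥ w)) + s)/(p ⬝ᵥ (C *ᵥ p))) • p + w)) = 0 := by
            rw [hexp]
            exact aux1 _ _ _ _ hqp (by linarith [hs])
          have hk := key _ w hw hx
          exact absurd ((mul_eq_zero.mp hk).resolve_left ha) hLw
      have hzz : z ⬝ᵥ z ≠ 0 := fun hc => hz0 (dotProduct_self_eq_zero.mp hc)
      have hzq : 0 < (p ⬝ᵥ (C *ᵥ p)) * (z ⬝ᵥ (C *ᵥ z)) := by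
        have hf : ∀ s : ℝ, 0 < ((p ⬝ᵥ (C *ᵥ p)) * (z ⬝ᵥ (C *ᵥ z)))*s^2
            + 2*((p ⬝ᵥ (C *ᵥ p)) * (z ⬝ᵥ (C *ᵥ y₀)))*s
            + ((p ⬝ᵥ (C *ᵥ p)) * (y₀ ⬝ᵥ (C *ᵥ y₀)) - (p ⬝ᵥ (C *ᵥ y₀))^2) := by
          intro s
          have h1 : p ⬝ᵥ (s • z + y₀) = 0 := by
            rw [dotProduct_add, dotProduct_smul, hzp, hy₀p, smul_eq_mul]; ring
          have h2 : p ⬝ᵥ (C *ᵥ (s • z + y₀)) = p ⬝ᵥ (C *ᵥ y₀) := by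
            rw [mulVec_add, mulVec_smul, dotProduct_add, dotProduct_smul, hzL,
              smul_eq_mul, mul_zero, zero_add]
          have h3 := hA (s • z + y₀) h1 (by rw [h2]; exact hy₀L)
          rw [h2, hexp] at h3
          nlinarith [h3]
        by_contra hA0'
        push_neg at hA0'
        rcases hA0'.lt_or_eq with hlt | heq
        · exact aux4 _ _ _ hlt hf
        · have hf' : ∀ s : ℝ, 0 < 2*((p ⬝ᵥ (C *ᵥ p)) * (z ⬝ᵥ (C *ᵥ y₀)))*s
              + ((p ⬝ᵥ (C *ᵥ p)) * (y₀ ⬝ᵥ (C *ᵥ y₀)) - (p ⬝ᵥ (C *ᵥ y₀))^2) := by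
            intro s
            have := hf s
            rw [heq] at this
            linarith [this]
          have hB0 := aux5 _ _ hf'
          have hBz : z ⬝ᵥ (C *ᵥ y₀) = 0 := (mul_eq_zero.mp hB0).resolve_left hqp
          have hQz : z ⬝ᵥ (C *ᵥ z) = 0 :=
            (mul_eq_zero.mp heq).resolve_left hqp
          exact hzkill hQz (by rw [← hsymm z y₀]; exact hBz)
      have hwz : ∀ w : Fin 3 → ℝ, p ⬝ᵥ w = 0 → p ⬝ᵥ (C *ᵥ w) = 0 →
          w = ((z ⬝ᵥ w)/(z ⬝ᵥ z)) • z := by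
        intro w hw hLw
        have e1 : cp3 z w = 0 := by
          rw [hzdef, cp3_cp3' p (C *ᵥ p) w]
          have e1a : w ⬝ᵥ p = 0 := by rw [dotProduct_comm]; exact hw
          have e1b : w ⬝ᵥ (C *ᵥ p) = 0 := by rw [hsymm]; exact hLw
          rw [e1a, e1b]; simp
        have e2 : (z ⬝ᵥ w) • z - (z ⬝ᵥ z) • w = 0 := by
          rw [← cp3_cp3 z z w, e1, cp3_zero]
        rw [sub_eq_zero] at e2
        have e4 := congrArg (fun v => (z ⬝ᵥ z)⁻¹ • v) e2.symm
        simp only [smul_smul] at e4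
        rw [inv_mul_cancel₀ hzz, one_smul] at e4
        rw [div_eq_inv_mul]
        exact e4
      have hdef : ∀ v : Fin 3 → ℝ, v ≠ 0 →
          0 < (p ⬝ᵥ (C *ᵥ p)) * (v ⬝ᵥ (C *ᵥ v)) := by
        intro v hv
        set a := (p ⬝ᵥ v)/(p ⬝ᵥ p) with hadef
        set w := v - a • p with hwdef
        have hw : p ⬝ᵥ w = 0 := by
          rw [hwdef, dotProduct_sub, dotProduct_smul, smul_eq_mul, hadef,
            div_mul_cancel₀ _ hpp, sub_self]
        have hvd : v = a • p + w := by rw [hwdef]; abel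
        have hQv : v ⬝ᵥ (C *ᵥ v) = a^2 * (p ⬝ᵥ (C *ᵥ p))
            + 2*a*(p ⬝ᵥ (C *ᵥ w)) + w ⬝ᵥ (C *ᵥ w) := by
          conv_lhs => rw [hvd]
          exact hexp a p w
        rcases eq_or_ne w 0 with hw0 | hw0
        · have ha0 : a ≠ 0 := by
            intro hc; apply hv; rw [hvd, hw0, hc, zero_smul, add_zero]
          have hQv' : v ⬝ᵥ (C *ᵥ v) = a^2 * (p ⬝ᵥ (C *ᵥ p)) := by
            rw [hQv, hw0, mulVec_zero, dotProduct_zero, zero_dotProduct, mul_zero]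
            ring
          rw [hQv']
          have h5 : a * (p ⬝ᵥ (C *ᵥ p)) ≠ 0 := mul_ne_zero ha0 hqp
          have h6 : 0 < (a * (p ⬝ᵥ (C *ᵥ p)))^2 :=
            lt_of_le_of_ne (sq_nonneg _) (Ne.symm (pow_ne_zero 2 h5))
          nlinarith [h6]
        · rcases eq_or_ne (p ⬝ᵥ (C *ᵥ w)) 0 with hLw | hLw
          · have ht := hwz w hw hLw
            have ht0 : (z ⬝ᵥ w)/(z ⬝ᵥ z) ≠ 0 := by
              intro hc; apply hw0; rw [ht, hc, zero_smul]
            have hQw : w ⬝ᵥ (C *ᵥ w) =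
                ((z ⬝ᵥ w)/(z ⬝ᵥ z))^2 * (z ⬝ᵥ (C *ᵥ z)) := by
              conv_lhs => rw [ht]
              rw [mulVec_smul, dotProduct_smul, smul_dotProduct, smul_eq_mul,
                smul_eq_mul]
              ring
            rw [hQv, hLw, hQw]
            have h6 : 0 < ((z ⬝ᵥ w)/(z ⬝ᵥ z))^2 :=
              lt_of_le_of_ne (sq_nonneg _) (Ne.symm (pow_ne_zero 2 ht0))
            nlinarith [mul_pos h6 hzq, sq_nonneg (a * (p ⬝ᵥ (C *ᵥ p)))]
          · have hAw := hA w hw hLw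
            rw [hQv]
            nlinarith [sq_nonneg (a*(p ⬝ᵥ (C *ᵥ p)) + p ⬝ᵥ (C *ᵥ w)), hAw]
      obtain ⟨x1, hx1⟩ := hpos
      obtain ⟨x2, hx2⟩ := hneg
      have hx10 : x1 ≠ 0 := by rintro rfl; simp at hx1
      have hx20 : x2 ≠ 0 := by rintro rfl; simp at hx2
      have d1 := hdef x1 hx10
      have d2 := hdef x2 hx20
      nlinarith [d1, d2, hx1, hx2, mul_pos d2 hx1, mul_pos d1 hx1]
end

section
/- Fix real numbers c < b < a and let u = (u₁, u₂, u₃) be a point with u₁u₂u₃ ≠ 0. Then the cubic polynomial φ(k) = (b−k)(c−k)u₁² + (a−k)(c−k)u₂² + (a−k)(b−k)u₃² − (a−k)(b−k)(c−k) has three distinct real roots k₁ < c < k₂ < b < k₃ < a. -/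
/-- The cubic determining the confocal coordinates of a generic point has three
distinct real roots interlacing `c < b < a`. -/
theorem stmt_11 (a b c : ℝ) (hcb : c < b) (hba : b < a)
    (u₁ u₂ u₃ : ℝ) (hu : u₁ * u₂ * u₃ ≠ 0) :
    ∃ k₁ k₂ k₃ : ℝ, k₁ < c ∧ c < k₂ ∧ k₂ < b ∧ b < k₃ ∧ k₃ < a ∧
      (∀ k ∈ ({k₁, k₂, k₃} : Set ℝ),
        (b - k) * (c - k) * u₁ ^ 2 + (a - k) * (c - k) * u₂ ^ 2 +
          (a - k) * (b - k) * u₃ ^ 2 - (a - k) * (b - k) * (c - k) = 0) := by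
  have hu1 : u₁ ≠ 0 := fun h => hu (by simp [h])
  have hu2 : u₂ ≠ 0 := fun h => hu (by simp [h])
  have hu3 : u₃ ≠ 0 := fun h => hu (by simp [h])
  set f : ℝ → ℝ := fun k =>
    (b - k) * (c - k) * u₁ ^ 2 + (a - k) * (c - k) * u₂ ^ 2 +
      (a - k) * (b - k) * u₃ ^ 2 - (a - k) * (b - k) * (c - k) with hf
  have hcont : Continuous f := by fun_prop
  have hfc : 0 < f c := by
    have h3 := sq_pos_of_ne_zero hu3
    have : f c = (a - c) * (b - c) * u₃ ^ 2 := by simp only [hf]; ring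
    rw [this]
    have hac : (0:ℝ) < a - c := by linarith
    have hbc : (0:ℝ) < b - c := by linarith
    positivity
  have hfb : f b < 0 := by
    have h2 := sq_pos_of_ne_zero hu2
    have : f b = -((a - b) * (b - c) * u₂ ^ 2) := by simp only [hf]; ring
    rw [this, neg_lt_zero]
    have hab : (0:ℝ) < a - b := by linarith
    have hbc : (0:ℝ) < b - c := by linarith
    positivity
  have hfa : 0 < f a := by
    have h1 := sq_pos_of_ne_zero hu1
    have : f a = (a - b) * (a - c) * u₁ ^ 2 := by simp only [hf]; ring
    rw [this]
    have hab : (0:ℝ) < a - b := by linarith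
    have hac : (0:ℝ) < a - c := by linarith
    positivity
  set S : ℝ := u₁ ^ 2 + u₂ ^ 2 + u₃ ^ 2 + 1 with hS
  have hS1 : 1 ≤ S := by nlinarith [sq_nonneg u₁, sq_nonneg u₂, sq_nonneg u₃]
  set m : ℝ := c - S with hm
  have hmc : m < c := by linarith
  have hfm : f m < 0 := by
    have hA : 0 < a - c := by linarith
    have hB : 0 < b - c := by linarith
    have hbm : (0:ℝ) ≤ b - m := by linarith
    have ham : (0:ℝ) ≤ a - m := by linarith
    have h1 : (b - m) * (c - m) * u₁ ^ 2 ≤ (a - m) * (b - m) * u₁ ^ 2 := by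
      nlinarith [mul_nonneg (mul_nonneg hbm (sq_nonneg u₁)) hA.le]
    have h2 : (a - m) * (c - m) * u₂ ^ 2 ≤ (a - m) * (b - m) * u₂ ^ 2 := by
      nlinarith [mul_nonneg (mul_nonneg ham (sq_nonneg u₂)) hB.le]
    have habm : 0 < (a - m) * (b - m) := by
      apply mul_pos <;> linarith
    have key : (a - m) * (b - m) * u₁ ^ 2 + (a - m) * (b - m) * u₂ ^ 2 +
        (a - m) * (b - m) * u₃ ^ 2 - (a - m) * (b - m) * (c - m) < 0 := by
      have hcm : c - m = S := by simp [hm]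
      rw [hcm]
      nlinarith [habm]
    simp only [hf]
    linarith
  -- root in (m, c)
  obtain ⟨k₁, hk₁mem, hk₁⟩ := intermediate_value_Ioo hmc.le hcont.continuousOn
    (Set.mem_Ioo.2 ⟨hfm, hfc⟩)
  -- root in (c, b) : f c > 0 > f b, use decreasing version
  obtain ⟨k₂, hk₂mem, hk₂⟩ := intermediate_value_Ioo' hcb.le hcont.continuousOn
    (Set.mem_Ioo.2 ⟨hfb, hfc⟩)
  -- root in (b, a)
  obtain ⟨k₃, hk₃mem, hk₃⟩ := intermediate_value_Ioo hba.le hcont.continuousOn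
    (Set.mem_Ioo.2 ⟨hfb, hfa⟩)
  refine ⟨k₁, k₂, k₃, hk₁mem.2, hk₂mem.1, hk₂mem.2, hk₃mem.1, hk₃mem.2, ?_⟩
  rintro k (rfl | rfl | rfl)
  · exact hk₁
  · exact hk₂
  · exact hk₃
end

section
/- Fix distinct reals a, b, c, let A_k = diag(1/(a−k),1/(b−k),1/(c−k)), and let u be a point with u^T A_{k_i} u = 1 for some k_i ∉ {a,b,c}. For any ℓ ∉ {a,b,c,k_i}, the tangent-cone matrix K = A_ℓ u u^T A_ℓ + (1 − u^T A_ℓ u) A_ℓ satisfies K (A_{k_i} u) = λ (A_{k_i} u) with eigenvalue λ = (u^T A_ℓ u − 1)/(ℓ − k_i). -/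
open Matrix

lemma vecMulVec_mulVec' {n : Type*} [Fintype n] (u w : n → ℝ) :
    vecMulVec u u *ᵥ w = (u ⬝ᵥ w) • u := by
  funext i
  simp only [mulVec, vecMulVec_apply, dotProduct, Pi.smul_apply, smul_eq_mul,
    Finset.sum_mul, mul_assoc]
  exact Finset.sum_congr rfl fun j _ => by ring

/-- The matrix of a confocal quadric. -/
noncomputable def confocalMatrix (a b c k : ℝ) : Matrix (Fin 3) (Fin 3) ℝ :=
  Matrix.diagonal ![1 / (a - k), 1 / (b - k), 1 / (c - k)]

lemma confocal_key (a b c kᵢ ℓ : ℝ) (hka : a ≠ kᵢ) (hkb : b ≠ kᵢ) (hkc : c ≠ kᵢ)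
    (hla : a ≠ ℓ) (hlb : b ≠ ℓ) (hlc : c ≠ ℓ) (hℓk : ℓ ≠ kᵢ) :
    confocalMatrix a b c ℓ * confocalMatrix a b c kᵢ =
      (ℓ - kᵢ)⁻¹ • (confocalMatrix a b c ℓ - confocalMatrix a b c kᵢ) := by
  have h1 := sub_ne_zero.2 hka
  have h2 := sub_ne_zero.2 hkb
  have h3 := sub_ne_zero.2 hkc
  have h4 := sub_ne_zero.2 hla
  have h5 := sub_ne_zero.2 hlb
  have h6 := sub_ne_zero.2 hlc
  have h7 := sub_ne_zero.2 hℓk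
  ext i j
  fin_cases i <;> fin_cases j <;>
    simp [confocalMatrix, Matrix.mul_apply, Fin.sum_univ_three, Matrix.diagonal,
      Matrix.smul_apply, Matrix.sub_apply] <;>
    field_simp <;> ring

/-- The normal vector `A_{kᵢ} u` of a confocal surface through `u` is an eigenvector of
the tangent-cone matrix `K = A_ℓ u uᵀ A_ℓ + (1 − uᵀ A_ℓ u) A_ℓ`, with eigenvalue
`(uᵀ A_ℓ u − 1)/(ℓ − kᵢ)`. -/
theorem stmt_15 (a b c : ℝ) (hab : a ≠ b) (hbc : b ≠ c) (hac : a ≠ c)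
    (kᵢ ℓ : ℝ) (hk : kᵢ ≠ a ∧ kᵢ ≠ b ∧ kᵢ ≠ c) (hℓ : ℓ ≠ a ∧ ℓ ≠ b ∧ ℓ ≠ c)
    (hℓk : ℓ ≠ kᵢ) (u : Fin 3 → ℝ)
    (hu : u ⬝ᵥ (confocalMatrix a b c kᵢ *ᵥ u) = 1)
    (K : Matrix (Fin 3) (Fin 3) ℝ)
    (hK : K = confocalMatrix a b c ℓ * vecMulVec u u * confocalMatrix a b c ℓ +
        (1 - u ⬝ᵥ (confocalMatrix a b c ℓ *ᵥ u)) • confocalMatrix a b c ℓ) :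
    K *ᵥ (confocalMatrix a b c kᵢ *ᵥ u) =
      ((u ⬝ᵥ (confocalMatrix a b c ℓ *ᵥ u) - 1) / (ℓ - kᵢ)) •
        (confocalMatrix a b c kᵢ *ᵥ u) := by
  obtain ⟨hka, hkb, hkc⟩ := hk
  obtain ⟨hla, hlb, hlc⟩ := hℓ
  set A := confocalMatrix a b c ℓ
  set B := confocalMatrix a b c kᵢ
  set s := u ⬝ᵥ (A *ᵥ u) with hs
  have hkey : A * B = (ℓ - kᵢ)⁻¹ • (A - B) :=
    confocal_key a b c kᵢ ℓ hka.symm hkb.symm hkc.symm hla.symm hlb.symm hlc.symm hℓk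
  have hAB : A *ᵥ (B *ᵥ u) = (ℓ - kᵢ)⁻¹ • (A *ᵥ u - B *ᵥ u) := by
    rw [mulVec_mulVec, hkey, smul_mulVec, sub_mulVec]
  have hdot : u ⬝ᵥ (A *ᵥ (B *ᵥ u)) = (ℓ - kᵢ)⁻¹ * (s - 1) := by
    rw [hAB, dotProduct_smul, dotProduct_sub, hu, ← hs, smul_eq_mul]
  subst hK
  rw [add_mulVec, ← mulVec_mulVec, ← mulVec_mulVec, vecMulVec_mulVec', mulVec_smul,
    hdot, smul_mulVec, hAB, smul_smul]
  funext i
  simp only [Pi.add_apply, Pi.smul_apply, Pi.sub_apply, smul_eq_mul]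
  have h7 : ℓ - kᵢ ≠ 0 := sub_ne_zero.2 hℓk
  field_simp
  ring
end

section
/- Fix c < b < a, let u have nonzero coordinates with confocal coordinates k₁ < c < k₂ < b < k₃ < a, and let ℓ ∉ {a,b,c,k₁,k₂,k₃}. Then u^T A_ℓ u − 1 = (ℓ−k₁)(ℓ−k₂)(ℓ−k₃)/((a−ℓ)(b−ℓ)(c−ℓ)), and consequently the eigenvalues λ_i = (u^T A_ℓ u − 1)/(ℓ − k_i) of the tangent-cone matrix K_{u,ℓ} are λ_i = ∏_{j≠i}(ℓ−k_j) / ((a−ℓ)(b−ℓ)(c−ℓ)), which are pairwise distinct. -/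
open Matrix

/-- For a generic point `u` with confocal coordinates `k₁ < c < k₂ < b < k₃ < a` and a
generic parameter `ℓ`, we have `uᵀ A_ℓ u − 1 = (ℓ−k₁)(ℓ−k₂)(ℓ−k₃)/((a−ℓ)(b−ℓ)(c−ℓ))`;
consequently the eigenvalues `λᵢ = (uᵀ A_ℓ u − 1)/(ℓ − kᵢ)` of the tangent-cone matrix
are given by the product formulas and are pairwise distinct. -/
theorem stmt_16 (a b c : ℝ) (hcb : c < b) (hba : b < a)
    (u : Fin 3 → ℝ) (hu₀ : ∀ i, u i ≠ 0)
    (k₁ k₂ k₃ : ℝ)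
    (hord : k₁ < c ∧ c < k₂ ∧ k₂ < b ∧ b < k₃ ∧ k₃ < a)
    (hroot : ∀ k ∈ ({k₁, k₂, k₃} : Set ℝ),
      (b - k) * (c - k) * (u 0) ^ 2 + (a - k) * (c - k) * (u 1) ^ 2 +
        (a - k) * (b - k) * (u 2) ^ 2 - (a - k) * (b - k) * (c - k) = 0)
    (ℓ : ℝ) (hℓ : ℓ ≠ a ∧ ℓ ≠ b ∧ ℓ ≠ c ∧ ℓ ≠ k₁ ∧ ℓ ≠ k₂ ∧ ℓ ≠ k₃) :
    u ⬝ᵥ (confocalMatrix a b c ℓ *ᵥ u) - 1 =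
        (ℓ - k₁) * (ℓ - k₂) * (ℓ - k₃) / ((a - ℓ) * (b - ℓ) * (c - ℓ)) ∧
      (u ⬝ᵥ (confocalMatrix a b c ℓ *ᵥ u) - 1) / (ℓ - k₁) =
        (ℓ - k₂) * (ℓ - k₃) / ((a - ℓ) * (b - ℓ) * (c - ℓ)) ∧
      (u ⬝ᵥ (confocalMatrix a b c ℓ *ᵥ u) - 1) / (ℓ - k₂) =
        (ℓ - k₁) * (ℓ - k₃) / ((a - ℓ) * (b - ℓ) * (c - ℓ)) ∧
      (u ⬝ᵥ (confocalMatrix a b c ℓ *ᵥ u) - 1) / (ℓ - k₃) =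
        (ℓ - k₁) * (ℓ - k₂) / ((a - ℓ) * (b - ℓ) * (c - ℓ)) ∧
      (u ⬝ᵥ (confocalMatrix a b c ℓ *ᵥ u) - 1) / (ℓ - k₁) ≠
        (u ⬝ᵥ (confocalMatrix a b c ℓ *ᵥ u) - 1) / (ℓ - k₂) ∧
      (u ⬝ᵥ (confocalMatrix a b c ℓ *ᵥ u) - 1) / (ℓ - k₁) ≠
        (u ⬝ᵥ (confocalMatrix a b c ℓ *ᵥ u) - 1) / (ℓ - k₃) ∧
      (u ⬝ᵥ (confocalMatrix a b c ℓ *ᵥ u) - 1) / (ℓ - k₂) ≠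
        (u ⬝ᵥ (confocalMatrix a b c ℓ *ᵥ u) - 1) / (ℓ - k₃) := by
  obtain ⟨h1c, hck2, hk2b, hbk3, hk3a⟩ := hord
  obtain ⟨hla, hlb, hlc, hl1, hl2, hl3⟩ := hℓ
  have h1 := hroot k₁ (by simp)
  have h2 := hroot k₂ (by simp)
  have h3 := hroot k₃ (by simp)
  have hk12 : k₁ - k₂ ≠ 0 := by intro h; nlinarith
  have hk13 : k₁ - k₃ ≠ 0 := by intro h; nlinarith
  have hk23 : k₂ - k₃ ≠ 0 := by intro h; nlinarith
  have hal : a - ℓ ≠ 0 := sub_ne_zero.2 (fun h => hla h.symm)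
  have hbl : b - ℓ ≠ 0 := sub_ne_zero.2 (fun h => hlb h.symm)
  have hcl : c - ℓ ≠ 0 := sub_ne_zero.2 (fun h => hlc h.symm)
  have hl1' : ℓ - k₁ ≠ 0 := sub_ne_zero.2 hl1
  have hl2' : ℓ - k₂ ≠ 0 := sub_ne_zero.2 hl2
  have hl3' : ℓ - k₃ ≠ 0 := sub_ne_zero.2 hl3
  have hD : (k₁ - k₂) * (k₁ - k₃) * (k₂ - k₃) ≠ 0 :=
    mul_ne_zero (mul_ne_zero hk12 hk13) hk23
  have hscaled : ((k₁ - k₂) * (k₁ - k₃) * (k₂ - k₃)) *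
      ((b - ℓ) * (c - ℓ) * (u 0) ^ 2 + (a - ℓ) * (c - ℓ) * (u 1) ^ 2 +
        (a - ℓ) * (b - ℓ) * (u 2) ^ 2 - (a - ℓ) * (b - ℓ) * (c - ℓ)) =
      ((k₁ - k₂) * (k₁ - k₃) * (k₂ - k₃)) * ((ℓ - k₁) * (ℓ - k₂) * (ℓ - k₃)) := by
    linear_combination ((k₂ - k₃) * (ℓ - k₂) * (ℓ - k₃)) * h1
      - ((k₁ - k₃) * (ℓ - k₁) * (ℓ - k₃)) * h2
      + ((k₁ - k₂) * (ℓ - k₁) * (ℓ - k₂)) * h3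
  have hkey : (b - ℓ) * (c - ℓ) * (u 0) ^ 2 + (a - ℓ) * (c - ℓ) * (u 1) ^ 2 +
      (a - ℓ) * (b - ℓ) * (u 2) ^ 2 - (a - ℓ) * (b - ℓ) * (c - ℓ) =
      (ℓ - k₁) * (ℓ - k₂) * (ℓ - k₃) := mul_left_cancel₀ hD hscaled
  have hdot : u ⬝ᵥ (confocalMatrix a b c ℓ *ᵥ u) =
      (u 0) ^ 2 / (a - ℓ) + (u 1) ^ 2 / (b - ℓ) + (u 2) ^ 2 / (c - ℓ) := by
    simp [confocalMatrix, Matrix.mulVec, dotProduct, Fin.sum_univ_three,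
      Matrix.diagonal]
    ring
  have hmain : u ⬝ᵥ (confocalMatrix a b c ℓ *ᵥ u) - 1 =
      (ℓ - k₁) * (ℓ - k₂) * (ℓ - k₃) / ((a - ℓ) * (b - ℓ) * (c - ℓ)) := by
    rw [hdot]
    field_simp
    linear_combination hkey
  have e1 : (u ⬝ᵥ (confocalMatrix a b c ℓ *ᵥ u) - 1) / (ℓ - k₁) =
      (ℓ - k₂) * (ℓ - k₃) / ((a - ℓ) * (b - ℓ) * (c - ℓ)) := by
    rw [hmain]; field_simp
  have e2 : (u ⬝ᵥ (confocalMatrix a b c ℓ *ᵥ u) - 1) / (ℓ - k₂) =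
      (ℓ - k₁) * (ℓ - k₃) / ((a - ℓ) * (b - ℓ) * (c - ℓ)) := by
    rw [hmain]; field_simp
  have e3 : (u ⬝ᵥ (confocalMatrix a b c ℓ *ᵥ u) - 1) / (ℓ - k₃) =
      (ℓ - k₁) * (ℓ - k₂) / ((a - ℓ) * (b - ℓ) * (c - ℓ)) := by
    rw [hmain]; field_simp
  have habc : (a - ℓ) * (b - ℓ) * (c - ℓ) ≠ 0 := mul_ne_zero (mul_ne_zero hal hbl) hcl
  refine ⟨hmain, e1, e2, e3, ?_, ?_, ?_⟩
  · rw [e1, e2]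
    intro h
    have h' := mul_right_cancel₀ habc ((div_eq_div_iff habc habc).1 h)
    have h'' : (ℓ - k₃) * (k₁ - k₂) = 0 := by linear_combination h'
    exact hk12 ((mul_eq_zero.1 h'').resolve_left hl3')
  · rw [e1, e3]
    intro h
    have h' := mul_right_cancel₀ habc ((div_eq_div_iff habc habc).1 h)
    have h'' : (ℓ - k₂) * (k₁ - k₃) = 0 := by linear_combination h'
    exact hk13 ((mul_eq_zero.1 h'').resolve_left hl2')
  · rw [e2, e3]
    intro h
    have h' := mul_right_cancel₀ habc ((div_eq_div_iff habc habc).1 h)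
    have h'' : (ℓ - k₁) * (k₂ - k₃) = 0 := by linear_combination h'
    exact hk23 ((mul_eq_zero.1 h'').resolve_left hl1')
end

section
/- Fix c < b < a and real ℓ with k₁ < ℓ < b, k₁ < c. The symmetric matrix with orthogonal eigenvectors A_{k₁}u, A_b u, w (for u on the focal hyperbola with confocal parameter k₁) and eigenvalues λ₁ = (b−ℓ)/((a−ℓ)(c−ℓ)), λ₂ = λ₃ = (k₁−ℓ)/((a−ℓ)(c−ℓ)) defines a circular cone with apex u whose aperture θ satisfies cos²θ = λ₃/(λ₃ − λ₁) = (k₁−ℓ)/(k₁−b), and 0 < (k₁−ℓ)/(k₁−b) < 1. -/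
open Matrix

/-- The cone from a point `u` of the focal hyperbola (with confocal parameter `k₁`) to
the confocal surface with parameter `ℓ`, `k₁ < ℓ < b`: a symmetric matrix with simple
eigenvalue `λ₁ = (b−ℓ)/((a−ℓ)(c−ℓ))` (unit eigenvector `r`) and repeated eigenvalue
`λ₃ = (k₁−ℓ)/((a−ℓ)(c−ℓ))` on `r^⊥` defines a circular cone with apex `u`, axis `r`
and aperture `θ` satisfying `cos²θ = λ₃/(λ₃−λ₁) = (k₁−ℓ)/(k₁−b) ∈ (0,1)`. -/
theorem stmt_19 (a b c : ℝ) (hcb : c < b) (hba : b < a)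
    (k₁ ℓ : ℝ) (hk₁c : k₁ < c) (hk₁ℓ : k₁ < ℓ) (hℓb : ℓ < b) (hℓc : ℓ ≠ c)
    (u : Fin 3 → ℝ) (C : Matrix (Fin 3) (Fin 3) ℝ) (hC : Cᵀ = C)
    (r : Fin 3 → ℝ) (hr : r ⬝ᵥ r = 1)
    (hrC : C *ᵥ r = ((b - ℓ) / ((a - ℓ) * (c - ℓ))) • r)
    (hperp : ∀ x : Fin 3 → ℝ, r ⬝ᵥ x = 0 →
      C *ᵥ x = ((k₁ - ℓ) / ((a - ℓ) * (c - ℓ))) • x) :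
    ((k₁ - ℓ) / ((a - ℓ) * (c - ℓ))) /
        ((k₁ - ℓ) / ((a - ℓ) * (c - ℓ)) - (b - ℓ) / ((a - ℓ) * (c - ℓ))) =
      (k₁ - ℓ) / (k₁ - b) ∧
    0 < (k₁ - ℓ) / (k₁ - b) ∧ (k₁ - ℓ) / (k₁ - b) < 1 ∧
    ∃ θ : ℝ, Real.cos θ ^ 2 = (k₁ - ℓ) / (k₁ - b) ∧
      ∀ x : Fin 3 → ℝ,
        ((x - u) ⬝ᵥ (C *ᵥ (x - u)) = 0 ↔
          ((x - u) ⬝ᵥ r) ^ 2 = ((x - u) ⬝ᵥ (x - u)) * Real.cos θ ^ 2) := by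
  have hD : (a - ℓ) * (c - ℓ) ≠ 0 := by
    have h1 : a - ℓ ≠ 0 := by nlinarith
    have h2 : c - ℓ ≠ 0 := sub_ne_zero.mpr (fun h => hℓc (by linarith))
    exact mul_ne_zero h1 h2
  have hkb : k₁ - b ≠ 0 := by nlinarith
  set D := (a - ℓ) * (c - ℓ) with hDdef
  set lam := (b - ℓ) / D with hlam
  set mu := (k₁ - ℓ) / D with hmu
  set t := (k₁ - ℓ) / (k₁ - b) with ht
  have heq : mu / (mu - lam) = t := by
    rw [hlam, hmu, ht]; field_simp
    rw [div_eq_iff (by intro h; apply hkb; linarith)]; ring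
  have ht0 : 0 < t := by
    rw [ht]; apply div_pos_of_neg_of_neg <;> linarith
  have ht1 : t < 1 := by
    rw [ht]
    exact (div_lt_one_of_neg (by linarith)).mpr (by linarith)
  have hcos : Real.cos (Real.arccos (Real.sqrt t)) ^ 2 = t := by
    rw [Real.cos_arccos (by nlinarith [Real.sqrt_nonneg t])
      (Real.sqrt_le_one.mpr (le_of_lt ht1))]
    exact Real.sq_sqrt (le_of_lt ht0)
  refine ⟨heq, ht0, ht1, Real.arccos (Real.sqrt t), hcos, ?_⟩
  intro x
  rw [hcos]
  set y := x - u with hy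
  have hdecomp : C *ᵥ y = mu • y + ((lam - mu) * (y ⬝ᵥ r)) • r := by
    have hp : r ⬝ᵥ (y - (y ⬝ᵥ r) • r) = 0 := by
      rw [dotProduct_sub, dotProduct_smul, hr, dotProduct_comm]
      simp
    have h1 := hperp _ hp
    have h2 : C *ᵥ y = C *ᵥ (y - (y ⬝ᵥ r) • r) + (y ⬝ᵥ r) • (C *ᵥ r) := by
      have hsplit : y = (y - (y ⬝ᵥ r) • r) + (y ⬝ᵥ r) • r := by module
      conv_lhs => rw [hsplit]
      rw [Matrix.mulVec_add, Matrix.mulVec_smul]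
    rw [h2, h1, hrC]
    module
  have hquad : y ⬝ᵥ (C *ᵥ y) = mu * (y ⬝ᵥ y) + (lam - mu) * (y ⬝ᵥ r) ^ 2 := by
    rw [hdecomp, dotProduct_add, dotProduct_smul, dotProduct_smul,
      smul_eq_mul, smul_eq_mul]
    ring
  have hml : mu - lam ≠ 0 := by
    rw [hmu, hlam, div_sub_div_same]
    exact div_ne_zero (fun h => hkb (by linarith)) hD
  rw [hquad, ← heq, ← mul_div_assoc, eq_div_iff hml]
  constructor
  · intro h
    linear_combination -h
  · intro h
    linear_combination -h
end
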